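/- arXiv:quant-ph/0507109 — 4 statements merged into one kernel-verified Lean document; each statement's English description precedes it below -/
import Mathlib

section
/- Let p ≥ 1 be a natural number and let L, M, γ, δ be positive reals and 0 < ε < 1. Set c = ((2+ε)/3)^{2/p}, n = ⌈ −log₂( sin²(πδ/(2(L+δ))) · (1 − c) ) ⌉, λ = max{ 2^{n−2}/(γ(L+δ)), 3·4^{n−2}·π·M/(√5·(L+δ)²·(1−ε)) }, μ = 1/(2λ(L+δ)), and ν = (1−ε)/(6πλ). Then n ≥ 1, λ, μ, ν > 0, and the following five inequalities hold: (i) 4^{n−1}·π·λ·M·μ²/√5 ≤ (1−ε)/3; (ii) 2πλν ≤ (1−ε)/3; (iii) 2^{n−1}·μ ≤ γ; (iv) 1/(2λμ) ≥ L + δ; (v) 1/sin(πλμδ) ≤ √( 2^n · (1 − c) ). -/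
/-!
With `A = L + δ` and `μ = 1/(2λA)`, every inequality except (v) is a rearrangement of one of the
two lower bounds built into `λ = max ...`, and (iv) and (ii) hold with equality. For (v), the
angle `πλμδ` is exactly `θ = πδ/(2A)`, and `n = ⌈-log₂ x⌉` with `x = sin² θ · (1 - c)`
in `(0, 1)` gives `2ⁿ ≥ 1/x`, i.e. `1/sin² θ ≤ 2ⁿ (1 - c)`.
-/

open Real

lemma one_le_ceil_neg_logb {b x : ℝ} (hb : 1 < b) (hx0 : 0 < x) (hx1 : x < 1) :
    1 ≤ ⌈-logb b x⌉ :=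
  Int.one_le_ceil_iff.mpr (neg_pos.mpr (logb_neg hb hx0 hx1))

lemma inv_le_zpow_ceil_neg_logb {b x : ℝ} (hb : 1 < b) (hx : 0 < x) :
    x⁻¹ ≤ b ^ ⌈-logb b x⌉ := by
  have h := rpow_le_rpow_of_exponent_le hb.le (Int.le_ceil (-logb b x))
  rwa [rpow_neg (by linarith), rpow_logb (by linarith) hb.ne' hx, rpow_intCast] at h

lemma one_div_le_sqrt_two_zpow_ceil {s a : ℝ} (hs : 0 < s) (ha : 0 < a) :
    1 / s ≤ √((2 : ℝ) ^ ⌈-logb 2 (s ^ 2 * a)⌉ * a) := by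
  have key : (s ^ 2 * a)⁻¹ ≤ (2 : ℝ) ^ ⌈-logb 2 (s ^ 2 * a)⌉ :=
    inv_le_zpow_ceil_neg_logb one_lt_two (by positivity)
  rw [le_sqrt (by positivity) (by positivity), div_pow, one_pow]
  calc 1 / s ^ 2 = (s ^ 2 * a)⁻¹ * a := by field_simp
    _ ≤ _ := mul_le_mul_of_nonneg_right key ha.le

lemma zpow_sub_one_eq_mul_zpow_sub_two {a : ℝ} (ha : a ≠ 0) (n : ℤ) :
    a ^ (n - 1) = a * a ^ (n - 2) := by
  rw [show n - 1 = n - 2 + 1 by ring, zpow_add_one₀ ha, mul_comm]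

section
variable {A lam : ℝ} (hA : 0 < A) (hlam : 0 < lam)
include hA hlam

lemma four_zpow_mul_sq_le {n : ℤ} {M ε : ℝ} (hε : ε < 1)
    (h : 3 * (4 : ℝ) ^ (n - 2) * π * M / (√5 * A ^ 2 * (1 - ε)) ≤ lam) :
    (4 : ℝ) ^ (n - 1) * π * lam * M * (1 / (2 * lam * A)) ^ 2 / √5 ≤ (1 - ε) / 3 := by
  have h5 : (0 : ℝ) < √5 := by positivity
  have h1ε : 0 < 1 - ε := by linarith
  rw [div_le_iff₀ (by positivity)] at h
  rw [zpow_sub_one_eq_mul_zpow_sub_two (by norm_num : (4 : ℝ) ≠ 0),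
    div_le_div_iff₀ h5 three_pos]
  field_simp
  nlinarith

lemma two_zpow_mul_le {n : ℤ} {γ : ℝ} (hγ : 0 < γ)
    (h : (2 : ℝ) ^ (n - 2) / (γ * A) ≤ lam) :
    (2 : ℝ) ^ (n - 1) * (1 / (2 * lam * A)) ≤ γ := by
  rw [div_le_iff₀ (by positivity)] at h
  rw [zpow_sub_one_eq_mul_zpow_sub_two two_ne_zero, ← le_div_iff₀' (by positivity)]
  field_simp
  linarith

lemma one_div_two_mul_mul_one_div : 1 / (2 * lam * (1 / (2 * lam * A))) = A := by
  field_simp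

lemma pi_mul_mul_one_div_mul (δ : ℝ) :
    π * lam * (1 / (2 * lam * A)) * δ = π * δ / (2 * A) := by
  field_simp

end

theorem stmt_1_general (p : ℕ) (hp : 1 ≤ p) (L M γ δ ε : ℝ)
    (hL : 0 < L) (hγ : 0 < γ) (hδ : 0 < δ) (hε0 : 0 < ε) (hε1 : ε < 1)
    (c : ℝ) (hc : c = ((2 + ε) / 3) ^ ((2 : ℝ) / (p : ℝ)))
    (n : ℤ)
    (hn : n = ⌈-Real.logb 2 (Real.sin (π * δ / (2 * (L + δ))) ^ 2 * (1 - c))⌉)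
    (lam : ℝ)
    (hlam : lam = max ((2 : ℝ) ^ (n - 2) / (γ * (L + δ)))
      (3 * (4 : ℝ) ^ (n - 2) * π * M / (Real.sqrt 5 * (L + δ) ^ 2 * (1 - ε))))
    (μ : ℝ) (hμ : μ = 1 / (2 * lam * (L + δ)))
    (ν : ℝ) (hν : ν = (1 - ε) / (6 * π * lam)) :
    1 ≤ n ∧ 0 < lam ∧ 0 < μ ∧ 0 < ν ∧
    (4 : ℝ) ^ (n - 1) * π * lam * M * μ ^ 2 / Real.sqrt 5 ≤ (1 - ε) / 3 ∧
    2 * π * lam * ν ≤ (1 - ε) / 3 ∧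
    (2 : ℝ) ^ (n - 1) * μ ≤ γ ∧
    L + δ ≤ 1 / (2 * lam * μ) ∧
    1 / Real.sin (π * lam * μ * δ) ≤ Real.sqrt ((2 : ℝ) ^ n * (1 - c)) := by
  have hA : 0 < L + δ := by positivity
  have hc0 : 0 < c := hc ▸ by positivity
  have hc1 : c < 1 := hc ▸ rpow_lt_one (by positivity) (by linarith) (by positivity)
  have h1c : 0 < 1 - c := by linarith
  have hsin : 0 < sin (π * δ / (2 * (L + δ))) := by
    refine sin_pos_of_pos_of_lt_pi (by positivity) ?_
    rw [div_lt_iff₀ (by positivity)]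
    nlinarith [pi_pos]
  have hx1 : sin (π * δ / (2 * (L + δ))) ^ 2 * (1 - c) < 1 := by
    nlinarith [sin_sq_le_one (π * δ / (2 * (L + δ)))]
  have hlam0 : 0 < lam := hlam ▸ lt_max_of_lt_left (by positivity)
  have h1ε : 0 < 1 - ε := by linarith
  refine ⟨hn ▸ one_le_ceil_neg_logb one_lt_two (by positivity) hx1, hlam0,
    hμ ▸ by positivity, hν ▸ by positivity, ?_, ?_, ?_, ?_, ?_⟩
  · exact hμ ▸ four_zpow_mul_sq_le hA hlam0 hε1 (hlam ▸ le_max_right _ _)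
  · rw [hν]
    field_simp
    norm_num
  · exact hμ ▸ two_zpow_mul_le hA hlam0 hγ (hlam ▸ le_max_left _ _)
  · rw [hμ, one_div_two_mul_mul_one_div hA hlam0]
  · rw [hμ, pi_mul_mul_one_div_mul hA hlam0, hn]
    exact one_div_le_sqrt_two_zpow_ceil hsin h1c

theorem stmt_1 (p : ℕ) (hp : 1 ≤ p) (L M γ δ ε : ℝ)
    (hL : 0 < L) (hM : 0 < M) (hγ : 0 < γ) (hδ : 0 < δ) (hε0 : 0 < ε) (hε1 : ε < 1)
    (c : ℝ) (hc : c = ((2 + ε) / 3) ^ ((2 : ℝ) / (p : ℝ)))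
    (n : ℤ)
    (hn : n = ⌈-Real.logb 2 (Real.sin (π * δ / (2 * (L + δ))) ^ 2 * (1 - c))⌉)
    (lam : ℝ)
    (hlam : lam = max ((2 : ℝ) ^ (n - 2) / (γ * (L + δ)))
      (3 * (4 : ℝ) ^ (n - 2) * π * M / (Real.sqrt 5 * (L + δ) ^ 2 * (1 - ε))))
    (μ : ℝ) (hμ : μ = 1 / (2 * lam * (L + δ)))
    (ν : ℝ) (hν : ν = (1 - ε) / (6 * π * lam)) :
    1 ≤ n ∧ 0 < lam ∧ 0 < μ ∧ 0 < ν ∧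
    (4 : ℝ) ^ (n - 1) * π * lam * M * μ ^ 2 / Real.sqrt 5 ≤ (1 - ε) / 3 ∧
    2 * π * lam * ν ≤ (1 - ε) / 3 ∧
    (2 : ℝ) ^ (n - 1) * μ ≤ γ ∧
    L + δ ≤ 1 / (2 * lam * μ) ∧
    1 / Real.sin (π * lam * μ * δ) ≤ Real.sqrt ((2 : ℝ) ^ n * (1 - c)) :=
  stmt_1_general p hp L M γ δ ε hL hγ hδ hε0 hε1 c hc n hn lam hlam μ hμ ν hν
end

section
/- For all natural numbers N ≥ 1 and p ≥ 1, Σ_{h ∈ (Fin N)^p} ( Σ_{m=1}^{p} (h_m − (N−1)/2)² )² ≤ p² · N^{p+4} / 80. -/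
/-!
By Cauchy–Schwarz, `(∑ₘ aₘ)² ≤ p ∑ₘ aₘ²`, so the left side is at most `p` times the sum over the
grid of `∑ₘ (hₘ - c)⁴`. Each coordinate contributes `N ^ (p - 1)` copies of the one-dimensional
centred fourth moment `∑ᵢ (i - c)⁴ = N (N² - 1) (3N² - 7) / 240 ≤ N⁵ / 80`.
-/

open Finset

theorem Fintype.sum_comp_eval {ι α M : Type*} [Fintype ι] [DecidableEq ι] [Fintype α]
    [AddCommMonoid M] (f : α → M) (i : ι) :
    ∑ x : ι → α, f (x i) = Fintype.card α ^ (Fintype.card ι - 1) • ∑ a, f a := by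
  rw [← (Equiv.funSplitAt i α).symm.sum_comp, Fintype.sum_prod_type]
  simp [Fintype.card_subtype_compl, sum_const, smul_sum]

theorem sum_range_sub_pow_four (c : ℝ) (N : ℕ) :
    ∑ i ∈ range N, ((i : ℝ) - c) ^ 4 =
      (N : ℝ) * (N - 1) * (2 * N - 1) * (3 * N ^ 2 - 3 * N - 1) / 30 - c * N ^ 2 * (N - 1) ^ 2
        + c ^ 2 * N * (N - 1) * (2 * N - 1) - 2 * c ^ 3 * N * (N - 1) + N * c ^ 4 := by
  induction N with
  | zero => simp
  | succ n ih => rw [sum_range_succ, ih]; push_cast; ring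

theorem sum_range_sub_half_pow_four (N : ℕ) :
    ∑ i ∈ range N, ((i : ℝ) - ((N : ℝ) - 1) / 2) ^ 4 =
      (N : ℝ) * (N ^ 2 - 1) * (3 * N ^ 2 - 7) / 240 := by
  rw [sum_range_sub_pow_four]; ring

theorem sum_range_sub_half_pow_four_le (N : ℕ) :
    ∑ i ∈ range N, ((i : ℝ) - ((N : ℝ) - 1) / 2) ^ 4 ≤ (N : ℝ) ^ 5 / 80 := by
  rw [sum_range_sub_half_pow_four]
  rcases N.eq_zero_or_pos with rfl | hpos
  · simp
  · have hN : (1 : ℝ) ≤ N := by exact_mod_cast hpos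
    nlinarith [pow_nonneg (N.cast_nonneg : (0 : ℝ) ≤ N) 3]

theorem stmt_5_general (N p : ℕ) :
    ∑ h : Fin p → Fin N, (∑ m : Fin p, (((h m : ℕ) : ℝ) - ((N : ℝ) - 1) / 2) ^ 2) ^ 2 ≤
      (p : ℝ) ^ 2 * (N : ℝ) ^ (p + 4) / 80 := by
  set g : Fin N → ℝ := fun i => (((i : ℕ) : ℝ) - ((N : ℝ) - 1) / 2) ^ 2
  have hfourth : ∑ i, g i ^ 2 ≤ N ^ 5 / 80 := by
    simpa only [g, ← pow_mul,
      Fin.sum_univ_eq_sum_range (fun i => ((i : ℝ) - ((N : ℝ) - 1) / 2) ^ 4)]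
      using sum_range_sub_half_pow_four_le N
  calc ∑ h : Fin p → Fin N, (∑ m, g (h m)) ^ 2
      ≤ ∑ h : Fin p → Fin N, p * ∑ m, g (h m) ^ 2 := by
        gcongr with h
        simpa using sq_sum_le_card_mul_sum_sq (s := univ) (f := fun m => g (h m))
    _ = p * ∑ m : Fin p, ∑ h : Fin p → Fin N, g (h m) ^ 2 := by rw [← mul_sum, sum_comm]
    _ = p ^ 2 * N ^ (p - 1) * ∑ i, g i ^ 2 := by
        simp only [Fintype.sum_comp_eval (fun i => g i ^ 2), Fintype.card_fin, nsmul_eq_mul,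
          sum_const, card_univ]
        push_cast; ring
    _ ≤ p ^ 2 * N ^ (p + 4) / 80 := by
        rcases p.eq_zero_or_pos with rfl | hp
        · simp
        · calc (p : ℝ) ^ 2 * N ^ (p - 1) * ∑ i, g i ^ 2
              ≤ (p : ℝ) ^ 2 * N ^ (p - 1) * (N ^ 5 / 80) := by gcongr
            _ = (p : ℝ) ^ 2 * N ^ (p + 4) / 80 := by
              rw [show p + 4 = p - 1 + 5 by omega, pow_add]; ring

theorem stmt_5 (N p : ℕ) (hN : 1 ≤ N) (hp : 1 ≤ p) :
    ∑ h : Fin p → Fin N, (∑ m : Fin p, (((h m : ℕ) : ℝ) - ((N : ℝ) - 1) / 2) ^ 2) ^ 2 ≤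
      (p : ℝ) ^ 2 * (N : ℝ) ^ (p + 4) / 80 :=
  stmt_5_general N p
end

section
/- Let N ≥ 1 and p ≥ 1 be natural numbers, v ∈ ℝ^p, and let d be a real with 0 < d ≤ 1/2 and N·sin²(πd) ≥ 1. For g ∈ (Fin N)^p define χ(g) = N^{−p} · Σ_{h ∈ (Fin N)^p} exp(2πi·((g·h)/N + v·h)). Then Σ_{g} |χ(g)|² ≥ (1 − 1/(N·sin²(πd)))^p, where the sum runs over all g ∈ (Fin N)^p such that for every coordinate m the distance from g_m/N + v_m to the nearest integer is strictly less than d. -/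
/-!
The phase `exp (2πi (g·h/N + v·h))` factors over the coordinates of `h`, so `χ g` is the product
of the one-dimensional coefficients `N⁻¹ ∑_{h < N} e(h θ)` with `θ = g_m / N + v_m`, and the sum
over the box of good `g` is the product of the one-dimensional sums. In dimension one the total
mass `∑_g |χ g|²` is `1` by Parseval, while the geometric-sum bound `|∑_{h < N} e(h θ)| ≤ 1/|sin πθ|`
gives each of the at most `N` bad frequencies (those with `θ` at distance `≥ d` from `ℤ`) mass at
most `1 / (N² sin² πd)`. Hence the good mass is at least `1 - 1 / (N sin² πd)`.
-/

open Real Finset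
open scoped Classical

noncomputable def e (t : ℝ) : ℂ := Complex.exp (2 * π * Complex.I * t)

lemma e_eq_exp_mul_I (t : ℝ) : e t = Complex.exp (↑(2 * π * t) * Complex.I) := by
  rw [e]; push_cast; ring_nf

lemma e_add (s t : ℝ) : e (s + t) = e s * e t := by
  rw [e, e, e, ← Complex.exp_add]; push_cast; ring_nf

lemma e_neg (t : ℝ) : e (-t) = starRingEnd ℂ (e t) := by
  rw [e, e, ← Complex.exp_conj]; simp [map_ofNat]

lemma e_natCast_mul (n : ℕ) (t : ℝ) : e (n * t) = e t ^ n := by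
  rw [e, e, ← Complex.exp_nat_mul]; push_cast; ring_nf

lemma e_intCast (k : ℤ) : e k = 1 :=
  Complex.exp_eq_one_iff.2 ⟨k, by push_cast; ring⟩

lemma e_sum {ι : Type*} (s : Finset ι) (f : ι → ℝ) : e (∑ i ∈ s, f i) = ∏ i ∈ s, e (f i) := by
  simp only [e, ← Complex.exp_sum, Complex.ofReal_sum, mul_sum]

lemma norm_e (t : ℝ) : ‖e t‖ = 1 := by
  rw [e_eq_exp_mul_I, Complex.norm_exp_ofReal_mul_I]

lemma norm_e_sub_one (t : ℝ) : ‖e t - 1‖ = 2 * |sin (π * t)| := by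
  rw [e_eq_exp_mul_I, mul_comm, Complex.norm_exp_I_mul_ofReal_sub_one, norm_mul,
    Real.norm_eq_abs, Real.norm_eq_abs]
  norm_num; ring_nf

lemma sum_e_mul_intCast_div {N : ℕ} (hN : N ≠ 0) (k : ℤ) :
    ∑ x : Fin N, e (x * (k / N)) = if (N : ℤ) ∣ k then (N : ℂ) else 0 := by
  have hζ : e (k / N) = Complex.exp (2 * π * Complex.I / N) ^ k := by
    rw [e, ← Complex.exp_int_mul]; push_cast; ring_nf
  have hpow : e (k / N) ^ N = 1 := by
    rw [← e_natCast_mul, mul_div_cancel₀ _ (by exact_mod_cast hN), e_intCast]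
  simp only [e_natCast_mul, Fin.sum_univ_eq_sum_range (e (k / N) ^ ·)]
  split_ifs with hk
  · rw [hζ, (Complex.isPrimitiveRoot_exp N hN).zpow_eq_one_iff_dvd k |>.2 hk]; simp
  · have hne : e (k / N) ≠ 1 := by
      rwa [hζ, Ne, (Complex.isPrimitiveRoot_exp N hN).zpow_eq_one_iff_dvd]
    rw [geom_sum_eq hne, hpow, sub_self, zero_div]

lemma Fin.natCast_dvd_intCast_sub_iff {N : ℕ} (a b : Fin N) :
    (N : ℤ) ∣ (a - b : ℤ) ↔ a = b := by
  refine ⟨fun h => Fin.ext ?_, fun h => by simp [h]⟩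
  have := Int.eq_zero_of_abs_lt_dvd h (by rw [abs_lt]; omega)
  omega

lemma sum_e_mul_sub_div {N : ℕ} (hN : N ≠ 0) (a b : Fin N) :
    ∑ x : Fin N, e (x * ((a - b : ℝ) / N)) = if a = b then (N : ℂ) else 0 := by
  have := sum_e_mul_intCast_div hN ((a : ℤ) - b)
  push_cast at this
  simpa only [Fin.natCast_dvd_intCast_sub_iff] using this

theorem sum_norm_sq_dft {N : ℕ} (hN : N ≠ 0) (f : Fin N → ℂ) :
    ∑ x : Fin N, ‖∑ h : Fin N, f h * e (h * (x / N))‖ ^ 2 = N * ∑ h, ‖f h‖ ^ 2 := by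
  apply Complex.ofReal_injective
  push_cast
  simp only [← Complex.mul_conj', map_sum, map_mul, ← e_neg, mul_sum, sum_mul]
  have hterm : ∀ x a b : Fin N,
      f a * e (a * (x / N)) * (starRingEnd ℂ (f b) * e (-(b * (x / N))))
        = f a * starRingEnd ℂ (f b) * e (x * ((a - b : ℝ) / N)) := fun x a b => by
    rw [mul_mul_mul_comm, ← e_add]; ring_nf
  simp_rw [hterm]
  rw [sum_comm]
  refine sum_congr rfl fun b _ => ?_
  rw [sum_comm]
  simp_rw [← mul_sum, sum_e_mul_sub_div hN, mul_ite, mul_zero, sum_ite_eq', mem_univ, if_true]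
  ring

noncomputable def expSum (N : ℕ) (θ : ℝ) : ℂ := ∑ h : Fin N, e (h * θ)

lemma sum_norm_sq_expSum {N : ℕ} (hN : N ≠ 0) (t : ℝ) :
    ∑ x : Fin N, ‖expSum N (x / N + t)‖ ^ 2 = N ^ 2 := by
  have := sum_norm_sq_dft hN (fun h => e (h * t))
  simp only [norm_e, one_pow, sum_const, card_univ, Fintype.card_fin, nsmul_one] at this
  rw [sq, ← this]
  refine sum_congr rfl fun x _ => ?_
  congr 2
  exact sum_congr rfl fun h _ => by rw [← e_add]; ring_nf

lemma norm_expSum_mul_abs_sin_le_one (N : ℕ) (θ : ℝ) : ‖expSum N θ‖ * |sin (π * θ)| ≤ 1 := by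
  have h := congrArg norm (geom_sum_mul (e θ) N)
  rw [← Fin.sum_univ_eq_sum_range (e θ ^ ·), norm_mul, norm_e_sub_one] at h
  simp only [← e_natCast_mul] at h
  have : ‖e (N * θ) - 1‖ ≤ 2 := (norm_sub_le _ _).trans (by simp [norm_e]; norm_num)
  rw [expSum]
  linarith

lemma sin_sq_le_sin_sq_of_le_abs_sub_intCast {d θ : ℝ} (hd : 0 ≤ d)
    (hθ : ∀ k : ℤ, d ≤ |θ - k|) : sin (π * d) ^ 2 ≤ sin (π * θ) ^ 2 := by
  set r := θ - round θ
  have hdr : d ≤ |r| := hθ (round θ)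
  have hr : |r| ≤ 1 / 2 := abs_sub_round θ
  have hcos : cos (2 * (π * θ)) = cos (2 * π * |r|) := by
    rw [show 2 * (π * θ) = 2 * π * r + round θ * (2 * π) by ring, cos_add_int_mul_two_pi,
      ← cos_abs, abs_mul, abs_of_pos two_pi_pos]
  rw [sin_sq_eq_half_sub, sin_sq_eq_half_sub, hcos]
  have := cos_le_cos_of_nonneg_of_le_pi (by positivity : 0 ≤ 2 * (π * d))
    (by nlinarith [pi_pos] : 2 * π * |r| ≤ π) (by nlinarith [pi_pos] : 2 * (π * d) ≤ 2 * π * |r|)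
  linarith

theorem one_sub_one_div_le_sum_near_norm_sq_expSum {N : ℕ} {d : ℝ} (t : ℝ) (hd : 0 ≤ d)
    (hNd : 0 < N * sin (π * d) ^ 2) :
    1 - 1 / (N * sin (π * d) ^ 2) ≤
      ∑ x ∈ univ.filter (fun x : Fin N => ∃ k : ℤ, |(x : ℝ) / N + t - k| < d),
        ‖(N : ℂ)⁻¹ * expSum N (x / N + t)‖ ^ 2 := by
  set s := sin (π * d) ^ 2
  set near := fun x : Fin N => ∃ k : ℤ, |(x : ℝ) / N + t - k| < d
  set F := fun x : Fin N => ‖expSum N (x / N + t)‖ ^ 2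
  have hs : 0 < s := pos_of_mul_pos_right hNd (Nat.cast_nonneg N)
  have hN : (0 : ℝ) < N := pos_of_mul_pos_left hNd hs.le
  have hfar : ∀ x ∈ univ.filter (fun x => ¬ near x), s * F x ≤ 1 := fun x hx => by
    have hθ : ∀ k : ℤ, d ≤ |(x : ℝ) / N + t - k| := by simpa [near] using (mem_filter.1 hx).2
    have := pow_le_one₀ (by positivity) (norm_expSum_mul_abs_sin_le_one N (x / N + t)) (n := 2)
    rw [mul_pow, sq_abs] at this
    nlinarith [sin_sq_le_sin_sq_of_le_abs_sub_intCast hd hθ, sq_nonneg ‖expSum N (x / N + t)‖]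
  have hfar_sum : ∑ x ∈ univ.filter (fun x => ¬ near x), F x ≤ N / s := by
    rw [le_div_iff₀' hs, mul_sum]
    calc ∑ x ∈ univ.filter (fun x => ¬ near x), s * F x
        ≤ ∑ _x ∈ univ.filter (fun x => ¬ near x), (1 : ℝ) := sum_le_sum hfar
      _ ≤ N := by simpa using card_filter_le univ (fun x => ¬ near x)
  have htotal := sum_filter_add_sum_filter_not univ near F
  rw [sum_norm_sq_expSum (by exact_mod_cast hN.ne') t] at htotal
  have hterm : ∀ x : Fin N, ‖(N : ℂ)⁻¹ * expSum N (x / N + t)‖ ^ 2 = F x / N ^ 2 := fun x => by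
    simp [F, mul_pow, div_eq_inv_mul]
  simp_rw [hterm, ← sum_div]
  rw [le_div_iff₀ (by positivity)]
  calc (1 - 1 / (N * s)) * N ^ 2 = N ^ 2 - N / s := by field_simp
    _ ≤ _ := by linarith

lemma dft_linearPhase_eq_prod (N p : ℕ) (v : Fin p → ℝ) (g : Fin p → Fin N) :
    ((N : ℂ) ^ p)⁻¹ * ∑ h : Fin p → Fin N, Complex.exp (2 * π * Complex.I *
        ((∑ m : Fin p, ((g m : ℕ) : ℝ) * ((h m : ℕ) : ℝ)) / (N : ℝ) +
         ∑ m : Fin p, v m * ((h m : ℕ) : ℝ)))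
      = ∏ m, (N : ℂ)⁻¹ * expSum N (g m / N + v m) := by
  have hphase : ∀ h : Fin p → Fin N, Complex.exp (2 * π * Complex.I *
        ((∑ m : Fin p, ((g m : ℕ) : ℝ) * ((h m : ℕ) : ℝ)) / (N : ℝ) +
         ∑ m : Fin p, v m * ((h m : ℕ) : ℝ)))
      = ∏ m, e (h m * (g m / N + v m)) := fun h => by
    rw [← e_sum, e]
    congr 3
    push_cast
    rw [sum_div, ← sum_add_distrib]
    exact sum_congr rfl fun m _ => by ring
  simp_rw [hphase, prod_mul_distrib, expSum, Fintype.prod_sum]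
  simp

lemma prod_sum_filter_eq_sum_filter_forall_prod {ι κ R : Type*} [Fintype ι] [Fintype κ]
    [CommSemiring R] (P : ι → κ → Prop) (F : ι → κ → R) :
    ∏ i, ∑ x ∈ univ.filter (P i), F i x
      = ∑ g ∈ univ.filter (fun g : ι → κ => ∀ i, P i (g i)), ∏ i, F i (g i) := by
  rw [prod_univ_sum]
  congr 1
  ext g
  simp [Fintype.mem_piFinset]

theorem stmt_12_general (N p : ℕ) (v : Fin p → ℝ)
    (d : ℝ) (hd0 : 0 < d) (hNd : 1 ≤ (N : ℝ) * Real.sin (π * d) ^ 2)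
    (χ : (Fin p → Fin N) → ℂ)
    (hχ : ∀ g : Fin p → Fin N, χ g = ((N : ℂ) ^ p)⁻¹ *
      ∑ h : Fin p → Fin N, Complex.exp (2 * π * Complex.I *
        ((∑ m : Fin p, ((g m : ℕ) : ℝ) * ((h m : ℕ) : ℝ)) / (N : ℝ) +
         ∑ m : Fin p, v m * ((h m : ℕ) : ℝ)))) :
    (1 - 1 / ((N : ℝ) * Real.sin (π * d) ^ 2)) ^ p ≤
      ∑ g ∈ Finset.univ.filter (fun g : Fin p → Fin N =>
          ∀ m : Fin p, ∃ k : ℤ, |((g m : ℕ) : ℝ) / (N : ℝ) + v m - (k : ℝ)| < d),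
        ‖χ g‖ ^ 2 := by
  have hpos : 0 < (N : ℝ) * sin (π * d) ^ 2 := by linarith
  calc (1 - 1 / ((N : ℝ) * sin (π * d) ^ 2)) ^ p
      = ∏ _m : Fin p, (1 - 1 / ((N : ℝ) * sin (π * d) ^ 2)) := by simp
    _ ≤ ∏ m, ∑ x ∈ univ.filter (fun x : Fin N => ∃ k : ℤ, |(x : ℝ) / N + v m - k| < d),
          ‖(N : ℂ)⁻¹ * expSum N (x / N + v m)‖ ^ 2 :=
        prod_le_prod (fun _ _ => sub_nonneg.2 ((div_le_one hpos).2 hNd))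
          (fun m _ => one_sub_one_div_le_sum_near_norm_sq_expSum (v m) hd0.le hpos)
    _ = _ := by
        rw [prod_sum_filter_eq_sum_filter_forall_prod]
        refine sum_congr (by ext; simp) fun g _ => ?_
        rw [hχ, dft_linearPhase_eq_prod, norm_prod, prod_pow]

theorem stmt_12 (N p : ℕ) (hN : 1 ≤ N) (hp : 1 ≤ p) (v : Fin p → ℝ)
    (d : ℝ) (hd0 : 0 < d) (hd1 : d ≤ 1 / 2) (hNd : 1 ≤ (N : ℝ) * Real.sin (π * d) ^ 2)
    (χ : (Fin p → Fin N) → ℂ)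
    (hχ : ∀ g : Fin p → Fin N, χ g = ((N : ℂ) ^ p)⁻¹ *
      ∑ h : Fin p → Fin N, Complex.exp (2 * π * Complex.I *
        ((∑ m : Fin p, ((g m : ℕ) : ℝ) * ((h m : ℕ) : ℝ)) / (N : ℝ) +
         ∑ m : Fin p, v m * ((h m : ℕ) : ℝ)))) :
    (1 - 1 / ((N : ℝ) * Real.sin (π * d) ^ 2)) ^ p ≤
      ∑ g ∈ Finset.univ.filter (fun g : Fin p → Fin N =>
          ∀ m : Fin p, ∃ k : ℤ, |((g m : ℕ) : ℝ) / (N : ℝ) + v m - (k : ℝ)| < d),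
        ‖χ g‖ ^ 2 :=
  stmt_12_general N p v d hd0 hNd χ hχ
end

section
/- Let N ≥ 1 and p ≥ 1 be natural numbers, let λ, μ, δ, L > 0 be reals with 2λμ(L + δ) ≤ 1 and N·sin²(πλμδ) ≥ 1, and let s ∈ ℝ^p satisfy |s_m| ≤ L for every coordinate m. Define c_g : Fin N → ℝ by c_g(g) = −g/(N λ μ) for 0 ≤ g ≤ N/2 − 1 and c_g(g) = (N − g)/(N λ μ) for N/2 ≤ g ≤ N − 1, and for g ∈ (Fin N)^p define χ(g) = N^{−p} · Σ_{h ∈ (Fin N)^p} exp(2πi·((g·h)/N + λμ·(s·h))). Then Σ_{g} |χ(g)|² ≥ (1 − 1/(N·sin²(πλμδ)))^p, where the sum runs over all g ∈ (Fin N)^p with |c_g(g_m) − s_m| < δ for every coordinate m. -/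
/-!
Write `e(x) = exp(2πix)`. In one coordinate the ideal state is the geometric series
`F(a) = ∑_{h<N} e(h (a/N + λμθ))`, and `a/N + λμθ ≡ λμ(θ - c_g(a))` modulo `1`. When
`|c_g(a) - θ| ≥ δ`, the band condition `2λμ(L + δ) ≤ 1` keeps this phase at distance at least
`λμδ` from the integers, so `|F(a)| ≤ 1 / sin(πλμδ)`. By Parseval the `|F(a)|²` add up to `N²`;
the at most `N` far indices therefore carry at most a fraction `1 / (N sin²(πλμδ))` of the mass.
The `p`-dimensional transform `χ` is the tensor product of these one-dimensional ones, so its mass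
on the product of the good sets is the product of the one-dimensional masses.
-/

open Real Finset
open scoped Classical

noncomputable def expTwoPiI (x : ℝ) : ℂ := Complex.exp (2 * π * Complex.I * x)

lemma expTwoPiI_eq_exp_I_mul (x : ℝ) : expTwoPiI x = Complex.exp (Complex.I * ↑(2 * π * x)) := by
  rw [expTwoPiI]; push_cast; ring_nf

lemma expTwoPiI_add (x y : ℝ) : expTwoPiI (x + y) = expTwoPiI x * expTwoPiI y := by
  rw [expTwoPiI, expTwoPiI, expTwoPiI, ← Complex.exp_add]; push_cast; ring_nf

lemma expTwoPiI_sum {ι : Type*} (s : Finset ι) (f : ι → ℝ) :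
    expTwoPiI (∑ i ∈ s, f i) = ∏ i ∈ s, expTwoPiI (f i) := by
  rw [expTwoPiI, Complex.ofReal_sum, Finset.mul_sum, Complex.exp_sum]; rfl

lemma expTwoPiI_natCast_mul (n : ℕ) (x : ℝ) : expTwoPiI (n * x) = expTwoPiI x ^ n := by
  rw [expTwoPiI, expTwoPiI, ← Complex.exp_nat_mul]; push_cast; ring_nf

lemma expTwoPiI_eq_one_iff (x : ℝ) : expTwoPiI x = 1 ↔ ∃ n : ℤ, x = n := by
  have h2πI : 2 * π * Complex.I ≠ 0 := by simp [Real.pi_ne_zero, Complex.I_ne_zero]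
  rw [expTwoPiI, Complex.exp_eq_one_iff]
  refine exists_congr fun n => ⟨fun h => ?_, fun h => by rw [h]; push_cast; ring⟩
  exact_mod_cast mul_left_cancel₀ h2πI (h.trans (mul_comm _ _))

lemma expTwoPiI_intCast (n : ℤ) : expTwoPiI n = 1 := (expTwoPiI_eq_one_iff _).2 ⟨n, rfl⟩

lemma norm_expTwoPiI (x : ℝ) : ‖expTwoPiI x‖ = 1 := by
  rw [expTwoPiI_eq_exp_I_mul, mul_comm]; exact Complex.norm_exp_ofReal_mul_I _

lemma conj_expTwoPiI (x : ℝ) : starRingEnd ℂ (expTwoPiI x) = expTwoPiI (-x) := by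
  rw [expTwoPiI, expTwoPiI, ← Complex.exp_conj]; simp [map_ofNat]

lemma norm_expTwoPiI_sub_one (x : ℝ) : ‖expTwoPiI x - 1‖ = 2 * |sin (π * x)| := by
  rw [expTwoPiI_eq_exp_I_mul, Complex.norm_exp_I_mul_ofReal_sub_one, norm_mul, Real.norm_eq_abs,
    Real.norm_eq_abs, abs_two]
  ring_nf

variable {N : ℕ}

lemma sum_expTwoPiI_mul_sub_div (h h' : Fin N) :
    ∑ a : Fin N, expTwoPiI (a * ((h : ℝ) - h') / N) = if h = h' then (N : ℂ) else 0 := by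
  split_ifs with hh
  · simp [hh, expTwoPiI]
  set ζ := expTwoPiI (((h : ℝ) - h') / N)
  have hζ : ζ ≠ 1 := by
    rw [Ne, expTwoPiI_eq_one_iff]
    rintro ⟨n, hn⟩
    have hN : (N : ℝ) ≠ 0 := by have := h.pos; positivity
    have hdvd : (N : ℤ) ∣ (h : ℤ) - h' := ⟨n, by field_simp at hn; exact_mod_cast hn⟩
    have := Int.eq_zero_of_abs_lt_dvd hdvd (by rw [abs_sub_lt_iff]; omega)
    exact hh (Fin.ext (by omega))
  have hζN : ζ ^ N = 1 := by
    rw [← expTwoPiI_natCast_mul]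
    convert expTwoPiI_intCast ((h : ℤ) - h') using 2
    have : (N : ℝ) ≠ 0 := by have := h.pos; positivity
    push_cast; field_simp
  calc ∑ a : Fin N, expTwoPiI (a * ((h : ℝ) - h') / N) = ∑ a : Fin N, ζ ^ (a : ℕ) := by
        simp_rw [ζ, ← expTwoPiI_natCast_mul, mul_div_assoc]
    _ = 0 := by rw [Fin.sum_univ_eq_sum_range (ζ ^ ·), geom_sum_eq hζ, hζN, sub_self, zero_div]

lemma sum_norm_sq_sum_mul_expTwoPiI (w : Fin N → ℂ) :
    ∑ a : Fin N, ‖∑ h : Fin N, w h * expTwoPiI (h * a / N)‖ ^ 2 = N * ∑ h, ‖w h‖ ^ 2 := by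
  apply Complex.ofReal_injective
  push_cast
  simp_rw [← Complex.mul_conj']
  calc ∑ a : Fin N, (∑ h : Fin N, w h * expTwoPiI (h * a / N)) *
        starRingEnd ℂ (∑ h : Fin N, w h * expTwoPiI (h * a / N))
      = ∑ a : Fin N, ∑ h : Fin N, ∑ h' : Fin N,
          w h * starRingEnd ℂ (w h') * expTwoPiI (a * ((h : ℝ) - h') / N) := by
        simp_rw [map_sum, map_mul, conj_expTwoPiI, sum_mul_sum]
        refine sum_congr rfl fun a _ => sum_congr rfl fun h _ => sum_congr rfl fun h' _ => ?_
        rw [mul_mul_mul_comm, ← expTwoPiI_add]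
        ring_nf
    _ = ∑ h : Fin N, ∑ h' : Fin N,
          w h * starRingEnd ℂ (w h') * ∑ a : Fin N, expTwoPiI (a * ((h : ℝ) - h') / N) := by
        simp_rw [mul_sum]
        rw [sum_comm]
        exact sum_congr rfl fun h _ => sum_comm
    _ = N * ∑ h, w h * starRingEnd ℂ (w h) := by
        simp_rw [sum_expTwoPiI_mul_sub_div, mul_ite, mul_zero, sum_ite_eq, mem_univ, if_true,
          mul_sum]
        exact sum_congr rfl fun h _ => mul_comm _ _

lemma norm_geom_sum_le_of_norm_eq_one {ζ : ℂ} (hζ : ‖ζ‖ = 1) (hζ1 : ζ ≠ 1) (n : ℕ) :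
    ‖∑ i ∈ range n, ζ ^ i‖ ≤ 2 / ‖ζ - 1‖ := by
  rw [geom_sum_eq hζ1, norm_div]
  gcongr
  calc ‖ζ ^ n - 1‖ ≤ ‖ζ ^ n‖ + ‖(1 : ℂ)‖ := norm_sub_le _ _
    _ = 2 := by rw [norm_pow, hζ, one_pow, norm_one]; norm_num

/-- One coordinate of the transformed state: `χ g = ∏ m, linearPhaseDFT N (λμ sₘ) (g m) / N`. -/
noncomputable def linearPhaseDFT (N : ℕ) (c : ℝ) (a : Fin N) : ℂ :=
  ∑ h : Fin N, expTwoPiI (h * (a / N + c))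

lemma linearPhaseDFT_eq_geom_sum (c : ℝ) (a : Fin N) :
    linearPhaseDFT N c a = ∑ i ∈ range N, expTwoPiI (a / N + c) ^ i := by
  simp_rw [linearPhaseDFT, expTwoPiI_natCast_mul]
  exact Fin.sum_univ_eq_sum_range (expTwoPiI (a / N + c) ^ ·) N

lemma sum_norm_sq_linearPhaseDFT (c : ℝ) : ∑ a, ‖linearPhaseDFT N c a‖ ^ 2 = N ^ 2 := by
  have h := sum_norm_sq_sum_mul_expTwoPiI fun h : Fin N => expTwoPiI (h * c)
  simp_rw [norm_expTwoPiI, one_pow, sum_const, card_univ, Fintype.card_fin, nsmul_one,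
    ← expTwoPiI_add] at h
  rw [sq, ← h]
  refine sum_congr rfl fun a _ => ?_
  rw [linearPhaseDFT]
  congr 2
  exact sum_congr rfl fun h _ => congrArg expTwoPiI (by ring)

/-- The decoding `c_g` of the statement, with `κ = λμ`. -/
noncomputable def gradDecode (N : ℕ) (κ : ℝ) (g : Fin N) : ℝ :=
  if 2 * (g : ℕ) < N then -(g : ℝ) / (N * κ) else (N - g) / (N * κ)

section gradDecode

variable {κ : ℝ} (hκ : κ ≠ 0) (g : Fin N)
include hκ

lemma mul_gradDecode :
    κ * gradDecode N κ g = if 2 * (g : ℕ) < N then -(g : ℝ) / N else (N - g) / N := by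
  have : (N : ℝ) ≠ 0 := by have := g.pos; positivity
  unfold gradDecode
  split_ifs <;> field_simp

lemma abs_mul_gradDecode_le : |κ * gradDecode N κ g| ≤ 1 / 2 := by
  have hN : (0 : ℝ) < N := by have := g.pos; positivity
  have hg : (g : ℝ) < N := by exact_mod_cast g.isLt
  rw [mul_gradDecode hκ, abs_le]
  split_ifs with h
  · have : 2 * (g : ℝ) < N := by exact_mod_cast h
    constructor
    · rw [le_div_iff₀ hN]; linarith
    · rw [div_le_iff₀ hN]; linarith [(g : ℕ).cast_nonneg (α := ℝ)]
  · have : (N : ℝ) ≤ 2 * g := by exact_mod_cast not_lt.1 h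
    constructor
    · rw [le_div_iff₀ hN]; linarith
    · rw [div_le_iff₀ hN]; linarith

lemma exists_div_add_mul_gradDecode_eq_intCast :
    ∃ n : ℤ, (g : ℝ) / N + κ * gradDecode N κ g = n := by
  rw [mul_gradDecode hκ]
  split_ifs
  · exact ⟨0, by ring⟩
  · have : (N : ℝ) ≠ 0 := by have := g.pos; positivity
    exact ⟨1, by field_simp; ring⟩

end gradDecode

lemma sin_pi_mul_le_abs_sin_pi_mul {c t : ℝ} (hc : 0 ≤ c) (hct : c ≤ |t|) (htc : |t| ≤ 1 - c) :
    sin (π * c) ≤ |sin (π * t)| := by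
  have hπ := pi_pos
  rw [abs_sin_eq_sin_abs_of_abs_le_pi (by rw [abs_mul, abs_of_pos hπ]; nlinarith), abs_mul,
    abs_of_pos hπ]
  rcases le_total |t| (1 / 2) with ht | ht
  · exact sin_le_sin_of_le_of_le_pi_div_two (by nlinarith) (by nlinarith) (by nlinarith)
  · rw [← sin_pi_sub (π * |t|), show π - π * |t| = π * (1 - |t|) by ring]
    exact sin_le_sin_of_le_of_le_pi_div_two (by nlinarith) (by nlinarith) (by nlinarith)

section OneCoordinate

variable {κ δ L θ : ℝ} (hκ : 0 < κ) (hδ : 0 < δ) (hband : 2 * κ * (L + δ) ≤ 1) (hθ : |θ| ≤ L)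
include hκ hδ hband hθ

lemma sin_pi_mul_mul_pos : 0 < sin (π * (κ * δ)) := by
  have hL : 0 ≤ L := (abs_nonneg θ).trans hθ
  have : κ * δ < 1 := by nlinarith [mul_nonneg hκ.le hL]
  exact sin_pos_of_pos_of_lt_pi (by positivity) (mul_lt_of_lt_one_right pi_pos this)

lemma norm_linearPhaseDFT_le_of_le_abs_gradDecode_sub {a : Fin N}
    (ha : δ ≤ |gradDecode N κ a - θ|) :
    ‖linearPhaseDFT N (κ * θ) a‖ ≤ (sin (π * (κ * δ)))⁻¹ := by
  set y := κ * (θ - gradDecode N κ a)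
  obtain ⟨n, hn⟩ := exists_div_add_mul_gradDecode_eq_intCast hκ.ne' a
  have hy_lo : κ * δ ≤ |y| := by
    rw [abs_mul, abs_of_pos hκ, abs_sub_comm]
    exact mul_le_mul_of_nonneg_left ha hκ.le
  have hy_hi : |y| ≤ 1 - κ * δ := by
    have := abs_mul_gradDecode_le hκ.ne' a
    calc |y| = |κ * θ - κ * gradDecode N κ a| := by rw [← mul_sub]
      _ ≤ |κ * θ| + |κ * gradDecode N κ a| := abs_sub _ _
      _ ≤ κ * L + 1 / 2 := by rw [abs_mul, abs_of_pos hκ]; gcongr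
      _ ≤ 1 - κ * δ := by linarith
  have hσ := sin_pi_mul_mul_pos hκ hδ hband hθ
  have hσy := sin_pi_mul_le_abs_sin_pi_mul (mul_pos hκ hδ).le hy_lo hy_hi
  have hphase : (a : ℝ) / N + κ * θ = y + n := by rw [← hn]; ring
  have hy1 : expTwoPiI y ≠ 1 := by
    intro h
    have := norm_expTwoPiI_sub_one y
    rw [h, sub_self, norm_zero] at this
    linarith
  rw [linearPhaseDFT_eq_geom_sum, hphase, expTwoPiI_add, expTwoPiI_intCast, mul_one]
  calc ‖∑ i ∈ range N, expTwoPiI y ^ i‖ ≤ 2 / ‖expTwoPiI y - 1‖ :=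
        norm_geom_sum_le_of_norm_eq_one (norm_expTwoPiI y) hy1 N
    _ = (|sin (π * y)|)⁻¹ := by rw [norm_expTwoPiI_sub_one, div_mul_cancel_left₀ two_ne_zero]
    _ ≤ (sin (π * (κ * δ)))⁻¹ := inv_anti₀ hσ hσy

lemma one_sub_inv_le_sum_norm_sq_linearPhaseDFT (hN : 0 < N) :
    1 - 1 / (N * sin (π * (κ * δ)) ^ 2) ≤
      ∑ a ∈ univ.filter (fun a : Fin N => |gradDecode N κ a - θ| < δ),
        ‖linearPhaseDFT N (κ * θ) a / N‖ ^ 2 := by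
  set F := fun a => ‖linearPhaseDFT N (κ * θ) a / N‖ ^ 2
  set σ := sin (π * (κ * δ))
  have hN' : (N : ℝ) ≠ 0 := by positivity
  have hσ : σ ≠ 0 := (sin_pi_mul_mul_pos hκ hδ hband hθ).ne'
  have htotal : ∑ a, F a = 1 := by
    simp only [F, norm_div, Complex.norm_natCast, div_pow]
    rw [← sum_div, sum_norm_sq_linearPhaseDFT, div_self (pow_ne_zero 2 hN')]
  have hfar : ∑ a ∈ univ.filter (fun a : Fin N => ¬ |gradDecode N κ a - θ| < δ), F a ≤
      1 / (N * σ ^ 2) :=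
    calc _ ≤ #(univ.filter (fun a : Fin N => ¬ |gradDecode N κ a - θ| < δ)) • (σ⁻¹ ^ 2 / N ^ 2) :=
          sum_le_card_nsmul _ _ _ fun a ha => by
            have := norm_linearPhaseDFT_le_of_le_abs_gradDecode_sub hκ hδ hband hθ
              (not_lt.1 (mem_filter.1 ha).2)
            simp only [F, norm_div, Complex.norm_natCast, div_pow]
            gcongr
      _ ≤ N * (σ⁻¹ ^ 2 / N ^ 2) := by
          rw [nsmul_eq_mul]
          gcongr
          exact_mod_cast (card_filter_le _ _).trans (card_univ.trans (Fintype.card_fin N)).le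
      _ = 1 / (N * σ ^ 2) := by field_simp
  linarith [sum_filter_add_sum_filter_not univ (fun a : Fin N => |gradDecode N κ a - θ| < δ) F]

end OneCoordinate

lemma sum_expTwoPiI_dot_eq_prod_linearPhaseDFT {ι : Type*} [Fintype ι] [DecidableEq ι]
    (c : ι → ℝ) (g : ι → Fin N) :
    ∑ h : ι → Fin N, expTwoPiI ((∑ m, (g m : ℝ) * h m) / N + ∑ m, c m * h m) =
      ∏ m, linearPhaseDFT N (c m) (g m) := by
  simp only [linearPhaseDFT]
  rw [Fintype.prod_sum]
  refine sum_congr rfl fun h _ => ?_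
  rw [← expTwoPiI_sum, sum_div, ← sum_add_distrib]
  exact congrArg expTwoPiI (sum_congr rfl fun m _ => by ring)

lemma sum_piFinset_norm_sq_prod {ι α : Type*} [Fintype ι] [DecidableEq ι] (f : ι → α → ℂ)
    (S : ι → Finset α) :
    ∑ g ∈ Fintype.piFinset S, ‖∏ i, f i (g i)‖ ^ 2 = ∏ i, ∑ a ∈ S i, ‖f i a‖ ^ 2 := by
  rw [prod_univ_sum]
  simp_rw [norm_prod, prod_pow]

theorem stmt_15_general (N p : ℕ) (hN : 1 ≤ N)
    (lam μ δ L : ℝ) (hlam : 0 < lam) (hμ : 0 < μ) (hδ : 0 < δ)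
    (hband : 2 * lam * μ * (L + δ) ≤ 1)
    (hNs : 1 ≤ (N : ℝ) * Real.sin (π * lam * μ * δ) ^ 2)
    (s : Fin p → ℝ) (hs : ∀ m : Fin p, |s m| ≤ L)
    (cg : Fin N → ℝ)
    (hcg : ∀ g : Fin N, cg g =
      if 2 * (g : ℕ) < N then -((g : ℕ) : ℝ) / ((N : ℝ) * lam * μ)
      else ((N : ℝ) - ((g : ℕ) : ℝ)) / ((N : ℝ) * lam * μ))
    (χ : (Fin p → Fin N) → ℂ)
    (hχ : ∀ g : Fin p → Fin N, χ g = ((N : ℂ) ^ p)⁻¹ *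
      ∑ h : Fin p → Fin N, Complex.exp (2 * π * Complex.I *
        ((∑ m : Fin p, ((g m : ℕ) : ℝ) * ((h m : ℕ) : ℝ)) / (N : ℝ) +
         lam * μ * ∑ m : Fin p, s m * ((h m : ℕ) : ℝ)))) :
    (1 - 1 / ((N : ℝ) * Real.sin (π * lam * μ * δ) ^ 2)) ^ p ≤
      ∑ g ∈ Finset.univ.filter (fun g : Fin p → Fin N =>
          ∀ m : Fin p, |cg (g m) - s m| < δ),
        ‖χ g‖ ^ 2 := by
  have hκ : 0 < lam * μ := mul_pos hlam hμ
  have hcg' : cg = gradDecode N (lam * μ) := funext fun g => by rw [hcg, gradDecode, mul_assoc]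
  have hχ' : ∀ g, χ g = ∏ m, linearPhaseDFT N (lam * μ * s m) (g m) / N := by
    intro g
    rw [hχ, prod_div_distrib, prod_const, card_univ, Fintype.card_fin, div_eq_inv_mul,
      ← sum_expTwoPiI_dot_eq_prod_linearPhaseDFT]
    refine congrArg _ (sum_congr rfl fun h _ => ?_)
    simp only [expTwoPiI, mul_assoc (lam * μ), ← mul_sum]
    push_cast
    ring_nf
  have hgood : univ.filter (fun g : Fin p → Fin N => ∀ m, |cg (g m) - s m| < δ) =
      Fintype.piFinset fun m => univ.filter fun a => |gradDecode N (lam * μ) a - s m| < δ := by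
    ext g
    simp [hcg', Fintype.mem_piFinset]
  rw [show π * lam * μ * δ = π * (lam * μ * δ) by ring] at hNs ⊢
  simp only [hgood, hχ']
  rw [sum_piFinset_norm_sq_prod fun m a => linearPhaseDFT N (lam * μ * s m) a / N,
    ← Fin.prod_const]
  exact prod_le_prod (fun _ _ => sub_nonneg.2 (div_le_one_of_le₀ hNs (by positivity))) fun m _ =>
    one_sub_inv_le_sum_norm_sq_linearPhaseDFT hκ hδ (by linarith) (hs m) (by omega)

theorem stmt_15 (N p : ℕ) (hN : 1 ≤ N) (hp : 1 ≤ p)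
    (lam μ δ L : ℝ) (hlam : 0 < lam) (hμ : 0 < μ) (hδ : 0 < δ) (hL : 0 < L)
    (hband : 2 * lam * μ * (L + δ) ≤ 1)
    (hNs : 1 ≤ (N : ℝ) * Real.sin (π * lam * μ * δ) ^ 2)
    (s : Fin p → ℝ) (hs : ∀ m : Fin p, |s m| ≤ L)
    (cg : Fin N → ℝ)
    (hcg : ∀ g : Fin N, cg g =
      if 2 * (g : ℕ) < N then -((g : ℕ) : ℝ) / ((N : ℝ) * lam * μ)
      else ((N : ℝ) - ((g : ℕ) : ℝ)) / ((N : ℝ) * lam * μ))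
    (χ : (Fin p → Fin N) → ℂ)
    (hχ : ∀ g : Fin p → Fin N, χ g = ((N : ℂ) ^ p)⁻¹ *
      ∑ h : Fin p → Fin N, Complex.exp (2 * π * Complex.I *
        ((∑ m : Fin p, ((g m : ℕ) : ℝ) * ((h m : ℕ) : ℝ)) / (N : ℝ) +
         lam * μ * ∑ m : Fin p, s m * ((h m : ℕ) : ℝ)))) :
    (1 - 1 / ((N : ℝ) * Real.sin (π * lam * μ * δ) ^ 2)) ^ p ≤
      ∑ g ∈ Finset.univ.filter (fun g : Fin p → Fin N =>
          ∀ m : Fin p, |cg (g m) - s m| < δ),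
        ‖χ g‖ ^ 2 :=
  stmt_15_general N p hN lam μ δ L hlam hμ hδ hband hNs s hs cg hcg χ hχ
end
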